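/- arXiv:0805.2063 — 5 statements merged into one kernel-verified Lean document; each statement's English description precedes it below -/
import Mathlib

section
/- (Fixed Point Theorem) Let 2 denote the two-element ω-CPO {0,1} with 0 ≤ 1, let μ : 2 → 2 be monotone, let S be an ω-CPO, and let φ : S → C(S,2) be an order isomorphism from S to the ω-CPO of Scott-continuous functions S → 2 ordered pointwise. Define g : S → 2 by g(x) = μ(φ(x)(x)). Then g is Scott-continuous and g(φ⁻¹(g)) is a fixed point of μ, i.e. μ(g(φ⁻¹(g))) = g(φ⁻¹(g)). -/
def OmegaCPO (α : Type*) [PartialOrder α] : Prop :=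
  (∃ b : α, ∀ x, b ≤ x) ∧ ∀ c : ℕ → α, Monotone c → ∃ l, IsLUB (Set.range c) l

def ScottCont {α β : Type*} [PartialOrder α] [PartialOrder β] (g : α → β) : Prop :=
  Monotone g ∧ ∀ c : ℕ → α, Monotone c → ∀ l, IsLUB (Set.range c) l →
    IsLUB (Set.range (g ∘ c)) (g l)

open Classical in
/-- An LUB criterion for `Bool`-valued ranges. -/
lemma isLUB_range_bool (u : ℕ → Bool) (b : Bool) (h1 : ∀ n, u n ≤ b)
    (h2 : b = true → ∃ n, u n = true) : IsLUB (Set.range u) b := by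
  constructor
  · rintro x ⟨n, rfl⟩; exact h1 n
  · intro x hx
    cases hb : b with
    | false => exact Bool.false_le x
    | true =>
      obtain ⟨n, hn⟩ := h2 hb
      have := hx ⟨n, rfl⟩
      rw [hn] at this
      exact this

/-- From Scott continuity: if `f l = true` for the lub `l` of a chain, some element
of the chain already maps to `true`. -/
lemma exists_true {S : Type*} [PartialOrder S] (f : S → Bool) (hf : ScottCont f)
    (c : ℕ → S) (hc : Monotone c) (l : S) (hl : IsLUB (Set.range c) l)
    (h : f l = true) : ∃ n, f (c n) = true := by
  by_contra hcon
  push_neg at hcon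
  have hlub := hf.2 c hc l hl
  have : f l ≤ false := by
    apply hlub.2
    rintro x ⟨n, rfl⟩
    simp only [Function.comp]
    exact le_of_eq (Bool.eq_false_iff.2 (hcon n))
  rw [h] at this
  exact absurd this (by simp)

/-- Fixed Point Theorem: with `2 = Bool` (`false ≤ true`), if `φ : S ≃o C(S,2)` is an
order isomorphism, `μ : 2 → 2` is monotone, and `g x = μ (φ x x)`, then `g` is
Scott-continuous and `g (φ⁻¹ g)` is a fixed point of `μ`. -/
theorem stmt_1 {S : Type*} [PartialOrder S] (hS : OmegaCPO S)
    (μ : Bool → Bool) (hμ : Monotone μ)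
    (φ : S ≃o {f : S → Bool // ScottCont f}) :
    ∃ hg : ScottCont (fun x => μ ((φ x).1 x)),
      μ ((fun x => μ ((φ x).1 x)) (φ.symm ⟨fun x => μ ((φ x).1 x), hg⟩)) =
        (fun x => μ ((φ x).1 x)) (φ.symm ⟨fun x => μ ((φ x).1 x), hg⟩) := by
  classical
  set g : S → Bool := fun x => μ ((φ x).1 x) with hgdef
  -- monotonicity of g
  have gmono : Monotone g := by
    intro a b hab
    apply hμ
    calc (φ a).1 a ≤ (φ a).1 b := (φ a).2.1 hab
      _ ≤ (φ b).1 b := by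
        have : (φ a : {f : S → Bool // ScottCont f}) ≤ φ b := φ.monotone hab
        exact this b
  -- Scott continuity of g
  have hg : ScottCont g := by
    refine ⟨gmono, ?_⟩
    intro c hc l hl
    apply isLUB_range_bool
    · intro n
      exact gmono (hl.1 ⟨n, rfl⟩)
    · intro hgl
      cases hμt : μ true with
      | true =>
        cases hμf : μ false with
        | true =>
          -- μ is constantly true
          refine ⟨0, ?_⟩
          simp only [g, Function.comp]
          cases h : (φ (c 0)).1 (c 0) <;> simp [hμt, hμf, h]
        | false =>
          -- μ = id : diagonal argument
          have hmuid : ∀ b : Bool, μ b = b := by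
            intro b; cases b <;> assumption
          have hφll : (φ l).1 l = true := by
            have : μ ((φ l).1 l) = true := hgl
            rwa [hmuid] at this
          -- pointwise sup of the chain φ (c n)
          set h : S → Bool := fun x => decide (∃ n, (φ (c n)).1 x = true) with hhdef
          have hmono : Monotone h := by
            intro a b hab
            rw [Bool.le_iff_imp]
            intro ha
            obtain ⟨n, hn⟩ := of_decide_eq_true ha
            apply decide_eq_true
            exact ⟨n, Bool.le_iff_imp.1 ((φ (c n)).2.1 hab) hn⟩
          have hcont : ScottCont h := by
            refine ⟨hmono, ?_⟩
            intro c' hc' l' hl'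
            apply isLUB_range_bool
            · intro m; exact hmono (hl'.1 ⟨m, rfl⟩)
            · intro hhl'
              obtain ⟨n, hn⟩ := of_decide_eq_true hhl'
              obtain ⟨m, hm⟩ := exists_true (φ (c n)).1 (φ (c n)).2 c' hc' l' hl' hn
              exact ⟨m, decide_eq_true ⟨n, hm⟩⟩
          -- h is the lub of the chain φ ∘ c in the subtype
          have Hh : IsLUB (Set.range (fun n => φ (c n))) (⟨h, hcont⟩ : {f : S → Bool // ScottCont f}) := by
            constructor
            · rintro x ⟨n, rfl⟩
              intro y
              rw [Bool.le_iff_imp]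
              intro hy
              exact decide_eq_true ⟨n, hy⟩
            · rintro ⟨u, hu⟩ hub
              intro y
              rw [Bool.le_iff_imp]
              intro hy
              obtain ⟨n, hn⟩ := of_decide_eq_true hy
              have := hub ⟨n, rfl⟩ y
              rw [Bool.le_iff_imp] at this
              exact this hn
          -- φ l is also the lub of that chain
          have Hφ : IsLUB (Set.range (fun n => φ (c n))) (φ l) := by
            have := φ.isLUB_image (s := Set.range c) (x := φ l)
            have h2 := this.2 (by rwa [φ.symm_apply_apply])
            rwa [← Set.range_comp] at h2
          have heq : φ l = (⟨h, hcont⟩ : {f : S → Bool // ScottCont f}) :=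
            Hφ.unique Hh
          have : h l = true := by
            have h2 : ((φ l : {f : S → Bool // ScottCont f}) : S → Bool) l = h l := by
              rw [heq]
            rw [← h2]; exact hφll
          obtain ⟨n, hn⟩ := of_decide_eq_true this
          obtain ⟨m, hm⟩ := exists_true (φ (c n)).1 (φ (c n)).2 c hc l hl hn
          refine ⟨max n m, ?_⟩
          have h1 : (φ (c n)).1 (c (max n m)) = true :=
            Bool.le_iff_imp.1 ((φ (c n)).2.1 (hc (le_max_right n m))) hm
          have h2 : (φ (c (max n m))).1 (c (max n m)) = true := by
            have hle : (φ (c n) : {f : S → Bool // ScottCont f}) ≤ φ (c (max n m)) :=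
              φ.monotone (hc (le_max_left n m))
            exact Bool.le_iff_imp.1 (hle (c (max n m))) h1
          simp only [g, Function.comp, h2, hmuid]
      | false =>
        -- μ true = false forces μ constantly false, contradicting g l = true
        have hμf : μ false = false := by
          have := hμ (Bool.false_le true)
          rw [hμt] at this
          exact le_antisymm this (Bool.false_le _)
        exfalso
        have : g l = false := by
          simp only [g]
          cases (φ l).1 l <;> simp [hμt, hμf]
        rw [hgl] at this
        exact absurd this (by simp)
  refine ⟨hg, ?_⟩
  set y := φ.symm ⟨g, hg⟩ with hy
  have key : ((φ y : {f : S → Bool // ScottCont f}) : S → Bool) = g := by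
    rw [hy, φ.apply_symm_apply]
  have hfix : g y = μ (g y) := by
    show μ ((φ y).1 y) = μ (g y)
    rw [key]
  show μ (g y) = g y
  conv_rhs => rw [hfix]
end

section
/- Let Λ be the linear order of type ω + 1 + ω* (elements 0 ≤ 1 ≤ 2 ≤ ⋯ ≤ ∞ ≤ ⋯ ≤ 2′ ≤ 1′ ≤ 0′). Then Λ is order-isomorphic to the partially ordered set C(Λ,2) of Scott-continuous functions Λ → 2 ordered pointwise, via the map sending n ↦ ψ_n where ψ_n(x) = 1 iff x ∈ {(n−1)′, …, 1′, 0′}, sending ∞ ↦ ψ_∞ where ψ_∞(x) = 1 iff x = k′ for some k ∈ ℕ, and sending n′ ↦ ψ_{n′} where ψ_{n′}(x) = 1 iff x ≥ n with x ≠ m for m < n, i.e. ψ_{n′}(x) = 0 exactly for x ∈ {0, 1, …, n−1}. -/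
/-- `Λ`, the linear order of type `ω + 1 + ω*`:
elements `0 ≤ 1 ≤ ⋯ ≤ ∞ ≤ ⋯ ≤ 2′ ≤ 1′ ≤ 0′`, where the unprimed part together
with `∞ = ⊤` is `WithTop ℕ` and the primed part is `ℕᵒᵈ`. -/
abbrev Lam : Type := Lex ((WithTop ℕ) ⊕ ℕᵒᵈ)

/-- The map `ψ`: for `n ∈ ℕ`, `ψ_n x = 1` iff `x ∈ {(n−1)′, …, 1′, 0′}`;
`ψ_∞ x = 1` iff `x = k′` for some `k`; for `n′`, `ψ_{n′} x = 0` exactly for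
`x ∈ {0, …, n−1}`.  (The first two cases merge, since `↑k < ⊤` always holds.) -/
def psi (a x : Lam) : Bool :=
  match ofLex a, ofLex x with
  | Sum.inl _, Sum.inl _ => false
  | Sum.inl n, Sum.inr k => decide ((↑(OrderDual.ofDual k) : WithTop ℕ) < n)
  | Sum.inr m, Sum.inl j => decide ((↑(OrderDual.ofDual m) : WithTop ℕ) ≤ j)
  | Sum.inr _, Sum.inr _ => true

/-!
For `a ∈ Λ`, `ψ_a` vanishes exactly on the principal down-set of a point `zeroSup a` of
`Λ ∪ {⊥}` (`⊥` for `a = 0′`, where `ψ_a ≡ 1`), and `zeroSup : Λ → Λ ∪ {⊥}` is an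
order-reversing bijection (`n ↦ n′`, `∞ ↦ ∞`, `(m+1)′ ↦ m`). In a linear order the
indicator of `{x | y < x}` is Scott-continuous, and these indicators are ordered reversely
to `y`; so `a ↦ ψ_a` is an order embedding into `C(Λ,2)`.
Conversely, the zero set of a Scott-continuous `f` is principal. If `f ∞ = 1`, Scott
continuity at `∞ = sup n` gives a least `m` with `f m = 1`, and `f = ψ_{m′}`; if `f ∞ = 0`,
the zero set is cut off by the least `k` with `f k′ = 0`, and `f = ψ_k` (`f = ψ_∞` if there
is no such `k`).
-/

open Set

theorem Monotone.exists_eq_decide_le {g : ℕ → Bool} (hg : Monotone g) :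
    ∃ m : WithTop ℕ, ∀ n : ℕ, g n = decide (m ≤ n) := by
  by_cases h : ∃ n, g n = true
  · refine ⟨Nat.find h, fun n => Bool.eq_iff_iff.2 ?_⟩
    simp only [decide_eq_true_iff, Nat.cast_le]
    exact ⟨Nat.find_min' h, fun hn => Bool.le_iff_imp.1 (hg hn) (Nat.find_spec h)⟩
  · push Not at h
    exact ⟨⊤, fun n => by simpa using h n⟩

theorem Antitone.exists_eq_decide_lt {g : ℕ → Bool} (hg : Antitone g) :
    ∃ N : WithTop ℕ, ∀ k : ℕ, g k = decide (k < N) := by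
  obtain ⟨N, hN⟩ := Monotone.exists_eq_decide_le (g := fun k => !g k)
    fun a b hab => compl_le_compl (hg hab)
  exact ⟨N, fun k => by simpa [← not_le] using hN k⟩

section LinearOrder

variable {α : Type*} [LinearOrder α]

theorem scottCont_decide_lt (y : WithBot α) : ScottCont fun x : α => decide (y < x) := by
  have hmono : Monotone fun x : α => decide (y < x) := fun a b hab => by
    simpa [Bool.le_iff_imp] using fun h => h.trans_le (WithBot.coe_le_coe.2 hab)
  refine ⟨hmono, fun c _ l hl => ⟨?_, fun b hb => ?_⟩⟩
  · rintro _ ⟨n, rfl⟩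
    exact hmono (hl.1 ⟨n, rfl⟩)
  · have hwitness : y < l → ∃ n, y < c n := by
      induction y using WithBot.recBotCoe with
      | bot => exact fun _ => ⟨0, WithBot.bot_lt_coe _⟩
      | coe z =>
        intro hz
        obtain ⟨_, ⟨n, rfl⟩, hn⟩ := (lt_isLUB_iff hl).1 (WithBot.coe_lt_coe.1 hz)
        exact ⟨n, WithBot.coe_lt_coe.2 hn⟩
    by_cases hl' : y < l
    · obtain ⟨n, hn⟩ := hwitness hl'
      simpa [hn, hl'] using hb ⟨n, rfl⟩
    · simp [hl']

theorem decide_lt_coe_le_decide_lt_coe_iff {y z : WithBot α} :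
    ((fun x : α => decide (y < x)) ≤ fun x : α => decide (z < x)) ↔ z ≤ y := by
  refine ⟨fun h => ?_, fun h x => by simpa [Bool.le_iff_imp] using h.trans_lt⟩
  by_contra! hyz
  induction z using WithBot.recBotCoe with
  | bot => exact not_lt_bot hyz
  | coe w => exact absurd (h w) (by simp [hyz])

end LinearOrder

namespace Lam

open OrderDual

def unprimed (j : WithTop ℕ) : Lam := toLex (Sum.inl j)

def primed (k : ℕ) : Lam := toLex (Sum.inr (toDual k))

@[elab_as_elim]
theorem recTopCoePrimed {motive : Lam → Prop} (top : motive (unprimed ⊤))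
    (coe : ∀ n : ℕ, motive (unprimed n)) (primed : ∀ k, motive (primed k)) (x : Lam) :
    motive x := by
  obtain j | k := x
  · induction j using WithTop.recTopCoe with
    | top => exact top
    | coe n => exact coe n
  · exact primed (ofDual k)

@[simp]
theorem unprimed_le_unprimed {j j' : WithTop ℕ} : unprimed j ≤ unprimed j' ↔ j ≤ j' :=
  Sum.Lex.inl_le_inl_iff

@[simp]
theorem primed_le_primed {k k' : ℕ} : primed k ≤ primed k' ↔ k' ≤ k :=
  Sum.Lex.inr_le_inr_iff.trans toDual_le_toDual

@[simp]
theorem unprimed_le_primed (j : WithTop ℕ) (k : ℕ) : unprimed j ≤ primed k :=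
  Sum.Lex.inl_le_inr _ _

@[simp]
theorem not_primed_le_unprimed (k : ℕ) (j : WithTop ℕ) : ¬primed k ≤ unprimed j :=
  Sum.Lex.not_inr_le_inl

@[simp]
theorem unprimed_lt_unprimed {j j' : WithTop ℕ} : unprimed j < unprimed j' ↔ j < j' :=
  Sum.Lex.inl_lt_inl_iff

@[simp]
theorem primed_lt_primed {k k' : ℕ} : primed k < primed k' ↔ k' < k :=
  Sum.Lex.inr_lt_inr_iff.trans toDual_lt_toDual

@[simp]
theorem unprimed_lt_primed (j : WithTop ℕ) (k : ℕ) : unprimed j < primed k :=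
  Sum.Lex.inl_lt_inr _ _

theorem monotone_unprimed_coe : Monotone fun n : ℕ => unprimed n :=
  fun _ _ hn => unprimed_le_unprimed.2 (by exact_mod_cast hn)

theorem isLUB_range_unprimed_coe :
    IsLUB (range fun n : ℕ => unprimed n) (unprimed ⊤) := by
  refine ⟨?_, fun b hb => ?_⟩
  · rintro _ ⟨n, rfl⟩
    simp
  · induction b using recTopCoePrimed with
    | top => exact le_rfl
    | coe j => exact absurd (hb ⟨j + 1, rfl⟩) (by rw [unprimed_le_unprimed]; norm_cast; omega)
    | primed k => simp

def zeroSup (a : Lam) : WithBot Lam :=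
  match ofLex a with
  | .inl none => (unprimed ⊤ : Lam)
  | .inl (some n) => (primed n : Lam)
  | .inr k =>
    match ofDual k with
    | 0 => ⊥
    | m + 1 => (unprimed m : Lam)

@[simp]
theorem psi_unprimed_unprimed (j j' : WithTop ℕ) : psi (unprimed j) (unprimed j') = false := rfl

@[simp]
theorem psi_unprimed_primed (j : WithTop ℕ) (k : ℕ) :
    psi (unprimed j) (primed k) = decide (k < j) := rfl

@[simp]
theorem psi_primed_unprimed (k : ℕ) (j : WithTop ℕ) :
    psi (primed k) (unprimed j) = decide (k ≤ j) := rfl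

@[simp]
theorem psi_primed_primed (k k' : ℕ) : psi (primed k) (primed k') = true := rfl

@[simp]
theorem zeroSup_top : zeroSup (unprimed ⊤) = (unprimed ⊤ : Lam) := rfl

@[simp]
theorem zeroSup_coe (n : ℕ) : zeroSup (unprimed n) = (primed n : Lam) := rfl

@[simp]
theorem zeroSup_primed_zero : zeroSup (primed 0) = ⊥ := rfl

@[simp]
theorem zeroSup_primed_succ (m : ℕ) : zeroSup (primed (m + 1)) = (unprimed m : Lam) := rfl

theorem zeroSup_le_zeroSup_iff {a b : Lam} : zeroSup a ≤ zeroSup b ↔ b ≤ a := by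
  induction a using recTopCoePrimed with
  | top | coe => induction b using recTopCoePrimed with
    | top | coe => simp
    | primed k => cases k <;> simp
  | primed m => cases m <;> induction b using recTopCoePrimed with
    | top | coe => simp
    | primed k => cases k <;> simp

theorem psi_eq (a : Lam) : psi a = fun x : Lam => decide (zeroSup a < x) := by
  funext x
  induction a using recTopCoePrimed with
  | top | coe => induction x using recTopCoePrimed <;> simp
  | primed m => cases m <;> induction x using recTopCoePrimed <;> simp [-Nat.cast_add]

end Lam

open Lam

theorem scottCont_psi (a : Lam) : ScottCont (psi a) :=
  psi_eq a ▸ scottCont_decide_lt (zeroSup a)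

theorem psi_le_psi_iff {a b : Lam} : psi a ≤ psi b ↔ a ≤ b := by
  rw [psi_eq, psi_eq, decide_lt_coe_le_decide_lt_coe_iff, zeroSup_le_zeroSup_iff]

theorem exists_psi_eq_of_scottCont {f : Lam → Bool} (hf : ScottCont f) : ∃ a, psi a = f := by
  obtain ⟨hmono, hchain⟩ := hf
  cases htop : f (unprimed ⊤)
  · have hunprimed (j : WithTop ℕ) : f (unprimed j) = false :=
      Bool.eq_false_of_le_false (htop ▸ hmono (unprimed_le_unprimed.2 le_top))
    obtain ⟨N, hN⟩ := Antitone.exists_eq_decide_lt (g := fun k => f (primed k))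
      fun _ _ hk => hmono (primed_le_primed.2 hk)
    refine ⟨unprimed N, funext fun x => ?_⟩
    induction x using recTopCoePrimed <;> simp [hunprimed, hN]
  · have hprimed (k : ℕ) : f (primed k) = true :=
      Bool.eq_true_of_true_le (htop ▸ hmono (unprimed_le_primed ⊤ k))
    obtain ⟨m, hm⟩ := Monotone.exists_eq_decide_le (g := fun n : ℕ => f (unprimed n))
      (hmono.comp monotone_unprimed_coe)
    obtain ⟨m, rfl⟩ : ∃ m' : ℕ, (m' : WithTop ℕ) = m := by
      refine WithTop.ne_top_iff_exists.1 fun hm_top => ?_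
      have : f (unprimed ⊤) ≤ false :=
        (hchain _ monotone_unprimed_coe _ isLUB_range_unprimed_coe).2 <| by
          rintro _ ⟨n, rfl⟩
          simp [hm, hm_top]
      exact absurd (htop ▸ this) (by decide)
    refine ⟨primed m, funext fun x => ?_⟩
    induction x using recTopCoePrimed <;> simp [htop, hm, hprimed]

/-- `Λ` is order-isomorphic to `C(Λ,2)` ordered pointwise, via `a ↦ ψ_a`. -/
theorem stmt_8 :
    ∃ e : Lam ≃o {f : Lam → Bool // ScottCont f},
      ∀ a x : Lam, (e a).1 x = psi a x := by
  let F : Lam ↪o {f : Lam → Bool // ScottCont f} :=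
    OrderEmbedding.ofMapLEIff (fun a => ⟨psi a, scottCont_psi a⟩) fun _ _ => psi_le_psi_iff
  have hF : Function.Surjective F := fun ⟨f, hf⟩ =>
    (exists_psi_eq_of_scottCont hf).imp fun _ ha => Subtype.ext ha
  exact ⟨OrderIso.ofSurjective F hF, fun _ _ => rfl⟩
end

section
/- Let Λ′ be the linear order of type ω + 1 + 1 + ω* (elements 0 ≤ 1 ≤ ⋯ ≤ ∞ ≤ ∞′ ≤ ⋯ ≤ 1′ ≤ 0′, where ∞′ is the immediate successor of ∞). Then Λ′ is order-isomorphic to the poset C(Λ′,2) of Scott-continuous functions from Λ′ to 2 = {0 ≤ 1}, ordered pointwise. -/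
/-- `Λ′`: the linear order `ℕ ⊕ {∞, ∞′} ⊕ ℕᵒᵖ` of type `ω + 1 + 1 + ω*`
(`∞ = ⊤` of the left block, `∞′ = ⊥` of the right block, `∞′` the immediate
successor of `∞`). -/
abbrev Lam' : Type := Lex ((WithTop ℕ) ⊕ (WithBot ℕᵒᵈ))

namespace Stmt10Aux

def A (n : ℕ) : Lam' := toLex (Sum.inl (n : WithTop ℕ))
def I : Lam' := toLex (Sum.inl ⊤)
def I' : Lam' := toLex (Sum.inr ⊥)
def B (n : ℕ) : Lam' := toLex (Sum.inr ((OrderDual.toDual n : ℕᵒᵈ) : WithBot ℕᵒᵈ))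

lemma lam_cases (x : Lam') : (∃ n, x = A n) ∨ x = I ∨ x = I' ∨ ∃ n, x = B n := by
  rcases x with (_ | n) | (_ | n)
  · exact Or.inr (Or.inl rfl)
  · exact Or.inl ⟨n, rfl⟩
  · exact Or.inr (Or.inr (Or.inl rfl))
  · exact Or.inr (Or.inr (Or.inr ⟨OrderDual.ofDual n, rfl⟩))

@[simp] lemma A_le_A {m n : ℕ} : A m ≤ A n ↔ m ≤ n := by simp [A]
@[simp] lemma A_lt_A {m n : ℕ} : A m < A n ↔ m < n := by simp [A]
@[simp] lemma A_le_I {n : ℕ} : A n ≤ I := by simp [A, I]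
@[simp] lemma A_lt_I {n : ℕ} : A n < I := by simp [A, I]
@[simp] lemma A_le_I' {n : ℕ} : A n ≤ I' := by simp [A, I']
@[simp] lemma A_lt_I' {n : ℕ} : A n < I' := by simp [A, I']
@[simp] lemma A_le_B {m n : ℕ} : A m ≤ B n := by simp [A, B]
@[simp] lemma A_lt_B {m n : ℕ} : A m < B n := by simp [A, B]
@[simp] lemma not_I_le_A {n : ℕ} : ¬ I ≤ A n := by simp [A, I]
@[simp] lemma not_I_lt_A {n : ℕ} : ¬ I < A n := by simp [A, I]
@[simp] lemma I_le_I' : I ≤ I' := by simp [I, I']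
@[simp] lemma I_lt_I' : I < I' := by simp [I, I']
@[simp] lemma not_I_lt_I : ¬ I < I := lt_irrefl _
@[simp] lemma I_le_B {n : ℕ} : I ≤ B n := by simp [I, B]
@[simp] lemma I_lt_B {n : ℕ} : I < B n := by simp [I, B]
@[simp] lemma not_I'_le_A {n : ℕ} : ¬ I' ≤ A n := by simp [I', A]
@[simp] lemma not_I'_lt_A {n : ℕ} : ¬ I' < A n := by simp [I', A]
@[simp] lemma not_I'_le_I : ¬ I' ≤ I := by simp [I', I]
@[simp] lemma not_I'_lt_I : ¬ I' < I := by simp [I', I]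
@[simp] lemma not_I'_lt_I' : ¬ I' < I' := lt_irrefl _
@[simp] lemma I'_le_B {n : ℕ} : I' ≤ B n := by simp [I', B]
@[simp] lemma I'_lt_B {n : ℕ} : I' < B n := by simp [I', B]
@[simp] lemma not_B_le_A {m n : ℕ} : ¬ B m ≤ A n := by simp [B, A]
@[simp] lemma not_B_lt_A {m n : ℕ} : ¬ B m < A n := by simp [B, A]
@[simp] lemma not_B_le_I {n : ℕ} : ¬ B n ≤ I := by simp [B, I]
@[simp] lemma not_B_lt_I {n : ℕ} : ¬ B n < I := by simp [B, I]
@[simp] lemma not_B_le_I' {n : ℕ} : ¬ B n ≤ I' := by simp [B, I']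
@[simp] lemma not_B_lt_I' {n : ℕ} : ¬ B n < I' := by simp [B, I']
@[simp] lemma B_le_B {m n : ℕ} : B m ≤ B n ↔ n ≤ m := by simp [B]
@[simp] lemma B_lt_B {m n : ℕ} : B m < B n ↔ n < m := by simp [B]

/-! ### Boolean LUB lemmas -/

lemma bool_le_false {b : Bool} (h : b ≤ false) : b = false := by
  cases b
  · rfl
  · exact absurd h (by decide)

lemma isLUB_bool {g : ℕ → Bool} {b : Bool} (h1 : ∀ n, g n ≤ b)
    (h2 : b = true → ∃ n, g n = true) : IsLUB (Set.range g) b := by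
  constructor
  · rintro _ ⟨n, rfl⟩; exact h1 n
  · intro u hu
    cases b with
    | false => exact Bool.false_le u
    | true =>
      obtain ⟨n, hn⟩ := h2 rfl
      have := hu (Set.mem_range_self n)
      rw [hn] at this; exact this

lemma exists_of_isLUB_true {g : ℕ → Bool} (h : IsLUB (Set.range g) true) :
    ∃ n, g n = true := by
  by_contra hn
  push_neg at hn
  have hub : false ∈ upperBounds (Set.range g) := by
    rintro _ ⟨n, rfl⟩
    cases hg : g n with
    | false => exact le_refl _
    | true => exact absurd hg (hn n)
  exact absurd (h.2 hub) (by decide)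

/-! ### Scott continuity of the building blocks -/

lemma scottCont_const (b : Bool) : ScottCont (fun _ : Lam' => b) := by
  refine ⟨monotone_const, fun c hc l hl => ?_⟩
  apply isLUB_bool
  · intro n; exact le_refl _
  · intro h; exact ⟨0, h⟩

lemma scottCont_lt (a : Lam') : ScottCont (fun z => decide (a < z)) := by
  constructor
  · intro x y hxy
    simp only [Bool.le_iff_imp, decide_eq_true_eq]
    exact fun h => lt_of_lt_of_le h hxy
  · intro c hc l hl
    apply isLUB_bool
    · intro n
      simp only [Function.comp, Bool.le_iff_imp, decide_eq_true_eq]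
      exact fun h => lt_of_lt_of_le h (hl.1 (Set.mem_range_self n))
    · simp only [decide_eq_true_eq]
      intro h
      by_contra hn
      push_neg at hn
      have hub : a ∈ upperBounds (Set.range c) := by
        rintro _ ⟨n, rfl⟩
        have := hn n
        simp only [Function.comp, ne_eq, decide_eq_true_eq] at this
        exact le_of_not_gt this
      exact absurd h (not_lt_of_ge (hl.2 hub))

lemma scottCont_le (a b : Lam') (hb : ∀ x : Lam', x < a → b < a)
    (hpred : ∀ x : Lam', x < a → x ≤ b) : ScottCont (fun z => decide (a ≤ z)) := by
  constructor
  · intro x y hxy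
    simp only [Bool.le_iff_imp, decide_eq_true_eq]
    exact fun h => le_trans h hxy
  · intro c hc l hl
    apply isLUB_bool
    · intro n
      simp only [Function.comp, Bool.le_iff_imp, decide_eq_true_eq]
      exact fun h => le_trans h (hl.1 (Set.mem_range_self n))
    · simp only [decide_eq_true_eq]
      intro h
      by_contra hn
      push_neg at hn
      have hlt : ∀ n, c n < a := by
        intro n
        have := hn n
        simp only [Function.comp, ne_eq, decide_eq_true_eq] at this
        exact lt_of_not_ge this
      have hub : b ∈ upperBounds (Set.range c) := by
        rintro _ ⟨n, rfl⟩; exact hpred _ (hlt n)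
      exact absurd h (not_le_of_gt (lt_of_le_of_lt (hl.2 hub) (hb _ (hlt 0))))

/-! ### The map φ -/

def phi (x : Lam') : Lam' → Bool :=
  match ofLex x with
  | Sum.inl none => fun z => decide (I' < z)
  | Sum.inl (some 0) => fun _ => false
  | Sum.inl (some (n+1)) => fun z => decide (B n ≤ z)
  | Sum.inr none => fun z => decide (I' ≤ z)
  | Sum.inr (some n) => fun z => decide (A (OrderDual.ofDual n) ≤ z)

lemma phi_I : phi I = fun z => decide (I' < z) := rfl
lemma phi_A0 : phi (A 0) = fun _ => false := rfl
lemma phi_A_succ (n : ℕ) : phi (A (n+1)) = fun z => decide (B n ≤ z) := rfl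
lemma phi_I' : phi I' = fun z => decide (I' ≤ z) := rfl
lemma phi_B (n : ℕ) : phi (B n) = fun z => decide (A n ≤ z) := rfl

lemma scottCont_phi (x : Lam') : ScottCont (phi x) := by
  rcases lam_cases x with ⟨n, rfl⟩ | rfl | rfl | ⟨n, rfl⟩
  · cases n with
    | zero => rw [phi_A0]; exact scottCont_const false
    | succ n =>
      rw [phi_A_succ]
      apply scottCont_le (B n) (B (n+1))
      · intro x _; simp
      · intro x hx
        rcases lam_cases x with ⟨m, rfl⟩ | rfl | rfl | ⟨m, rfl⟩
        · simp
        · simp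
        · simp
        · simp at hx ⊢; omega
  · rw [phi_I]; exact scottCont_lt I'
  · rw [phi_I']
    apply scottCont_le I' I
    · intro x _; simp
    · intro x hx
      rcases lam_cases x with ⟨m, rfl⟩ | rfl | rfl | ⟨m, rfl⟩
      · simp
      · exact le_refl _
      · simp at hx
      · simp at hx
  · rw [phi_B]
    cases n with
    | zero =>
      apply scottCont_le (A 0) (A 0)
      all_goals
        intro x hx
        exfalso
        rcases lam_cases x with ⟨m, rfl⟩ | rfl | rfl | ⟨m, rfl⟩ <;> simp at hx
    | succ n =>
      apply scottCont_le (A (n+1)) (A n)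
      · intro x _; simp
      · intro x hx
        rcases lam_cases x with ⟨m, rfl⟩ | rfl | rfl | ⟨m, rfl⟩
        · simp at hx ⊢; omega
        · simp at hx
        · simp at hx
        · simp at hx

/-! ### Monotonicity -/

lemma decide_le_mono {a a' z : Lam'} (h : a' ≤ a) :
    decide (a ≤ z) ≤ decide (a' ≤ z) := by
  simp only [Bool.le_iff_imp, decide_eq_true_eq]
  exact fun hz => le_trans h hz

lemma decide_le_lt {a a' z : Lam'} (h : a' < a) :
    decide (a ≤ z) ≤ decide (a' < z) := by
  simp only [Bool.le_iff_imp, decide_eq_true_eq]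
  exact fun hz => lt_of_lt_of_le h hz

lemma decide_lt_le {a a' z : Lam'} (h : a' ≤ a) :
    decide (a < z) ≤ decide (a' ≤ z) := by
  simp only [Bool.le_iff_imp, decide_eq_true_eq]
  exact fun hz => le_of_lt (lt_of_le_of_lt h hz)

lemma phi_mono : Monotone phi := by
  intro x y hxy z
  rcases lam_cases x with ⟨n, rfl⟩ | rfl | rfl | ⟨n, rfl⟩ <;>
    rcases lam_cases y with ⟨m, rfl⟩ | rfl | rfl | ⟨m, rfl⟩
  -- x = A n
  · cases n with
    | zero => cases m with
      | zero => exact le_refl _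
      | succ m => rw [phi_A0]; exact Bool.false_le _
    | succ n =>
      cases m with
      | zero => simp at hxy
      | succ m =>
        rw [phi_A_succ, phi_A_succ]
        have : n ≤ m := by simpa using hxy
        exact decide_le_mono (by simp [this])
  · cases n with
    | zero => rw [phi_A0]; exact Bool.false_le _
    | succ n => rw [phi_A_succ, phi_I]; exact decide_le_lt (by simp)
  · cases n with
    | zero => rw [phi_A0]; exact Bool.false_le _
    | succ n => rw [phi_A_succ, phi_I']; exact decide_le_mono (by simp)
  · cases n with
    | zero => rw [phi_A0]; exact Bool.false_le _
    | succ n => rw [phi_A_succ, phi_B]; exact decide_le_mono (by simp)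
  -- x = I
  · simp at hxy
  · exact le_refl _
  · rw [phi_I, phi_I']; exact decide_lt_le (le_refl _)
  · rw [phi_I, phi_B]; exact decide_lt_le (by simp)
  -- x = I'
  · simp at hxy
  · simp at hxy
  · exact le_refl _
  · rw [phi_I', phi_B]; exact decide_le_mono (by simp)
  -- x = B n
  · simp at hxy
  · simp at hxy
  · simp at hxy
  · rw [phi_B, phi_B]
    have : m ≤ n := by simpa using hxy
    exact decide_le_mono (by simp [this])

/-! ### Strictness witnesses -/

lemma phi_witness {x y : Lam'} (h : x < y) :
    ∃ z, phi x z = false ∧ phi y z = true := by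
  rcases lam_cases x with ⟨n, rfl⟩ | rfl | rfl | ⟨n, rfl⟩ <;>
    rcases lam_cases y with ⟨m, rfl⟩ | rfl | rfl | ⟨m, rfl⟩
  -- x = A n
  · have hnm : n < m := by simpa using h
    obtain ⟨m', rfl⟩ : ∃ m', m = m' + 1 := ⟨m - 1, by omega⟩
    refine ⟨B m', ?_, ?_⟩
    · cases n with
      | zero => rw [phi_A0]
      | succ n =>
        rw [phi_A_succ]
        simp only [decide_eq_false_iff_not]
        simp; omega
    · rw [phi_A_succ]; simp
  · refine ⟨B (n+1), ?_, ?_⟩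
    · cases n with
      | zero => rw [phi_A0]
      | succ n =>
        rw [phi_A_succ]
        simp only [decide_eq_false_iff_not]
        simp
    · rw [phi_I]; simp
  · refine ⟨I', ?_, ?_⟩
    · cases n with
      | zero => rw [phi_A0]
      | succ n =>
        rw [phi_A_succ]
        simp only [decide_eq_false_iff_not]
        simp
    · rw [phi_I']; simp
  · refine ⟨A m, ?_, ?_⟩
    · cases n with
      | zero => rw [phi_A0]
      | succ n =>
        rw [phi_A_succ]
        simp only [decide_eq_false_iff_not]
        simp
    · rw [phi_B]; simp
  -- x = I
  · simp at h
  · exact absurd h (lt_irrefl _)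
  · exact ⟨I', by rw [phi_I]; simp, by rw [phi_I']; simp⟩
  · exact ⟨A m, by rw [phi_I]; simp, by rw [phi_B]; simp⟩
  -- x = I'
  · simp at h
  · simp at h
  · exact absurd h (lt_irrefl _)
  · exact ⟨A m, by rw [phi_I']; simp, by rw [phi_B]; simp⟩
  -- x = B n
  · simp at h
  · simp at h
  · simp at h
  · have hmn : m < n := by simpa using h
    refine ⟨A m, ?_, by rw [phi_B]; simp⟩
    rw [phi_B]
    simp only [decide_eq_false_iff_not]
    simp; omega

/-! ### The increasing sequence `A` has LUB `I` -/

lemma monotone_A : Monotone (fun n => A n) := fun a b hab => by simp [hab]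

lemma isLUB_A : IsLUB (Set.range fun n => A n) I := by
  constructor
  · rintro _ ⟨n, rfl⟩; simp
  · intro u hu
    rcases lam_cases u with ⟨m, rfl⟩ | rfl | rfl | ⟨m, rfl⟩
    · have := hu (Set.mem_range_self (m+1))
      simp at this
    · exact le_refl _
    · simp
    · simp

/-! ### Surjectivity -/

lemma phi_surj_aux (f : Lam' → Bool) (hf : ScottCont f) : ∃ x, phi x = f := by
  obtain ⟨hmono, hscott⟩ := hf
  by_cases hI : f I = true
  · -- there is a first true among the A n
    have hlub := hscott (fun n => A n) monotone_A I isLUB_A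
    rw [hI] at hlub
    have hex : ∃ n, f (A n) = true := exists_of_isLUB_true hlub
    classical
    set n₀ := Nat.find hex with hn₀
    refine ⟨B n₀, ?_⟩
    funext z
    rw [phi_B]
    rcases lam_cases z with ⟨m, rfl⟩ | rfl | rfl | ⟨m, rfl⟩
    · by_cases hm : n₀ ≤ m
      · have h1 : f (A m) = true := by
          have := hmono (show A n₀ ≤ A m by simp [hm])
          rw [Nat.find_spec hex] at this
          exact Bool.eq_true_of_true_le this
        simp [hm, h1]
      · have h2 : f (A m) = false := by
          have := Nat.find_min hex (show m < n₀ by omega)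
          simpa using this
        simp [hm, h2]
    · simp [hI]
    · have : f I' = true := by
        have := hmono (show A n₀ ≤ I' by simp)
        rw [Nat.find_spec hex] at this
        exact Bool.eq_true_of_true_le this
      simp [this]
    · have : f (B m) = true := by
        have := hmono (show A n₀ ≤ B m by simp)
        rw [Nat.find_spec hex] at this
        exact Bool.eq_true_of_true_le this
      simp [this]
  · have hIfalse : f I = false := by simpa using hI
    have hAfalse : ∀ v : Lam', v ≤ I → f v = false := by
      intro v hv
      have := hmono hv
      rw [hIfalse] at this
      exact bool_le_false this
    by_cases hI' : f I' = true
    · refine ⟨I', ?_⟩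
      funext z
      rw [phi_I']
      rcases lam_cases z with ⟨m, rfl⟩ | rfl | rfl | ⟨m, rfl⟩
      · simp [hAfalse (A m) (by simp)]
      · simp [hIfalse]
      · simp [hI']
      · have : f (B m) = true := by
          have := hmono (show I' ≤ B m by simp)
          rw [hI'] at this
          exact Bool.eq_true_of_true_le this
        simp [this]
    · have hI'false : f I' = false := by simpa using hI'
      by_cases hall : ∀ n : ℕ, f (B n) = true
      · refine ⟨I, ?_⟩
        funext z
        rw [phi_I]
        rcases lam_cases z with ⟨m, rfl⟩ | rfl | rfl | ⟨m, rfl⟩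
        · simp [hAfalse (A m) (by simp)]
        · simp [hIfalse]
        · simp [hI'false]
        · simp [hall m]
      · push_neg at hall
        have hex : ∃ n, f (B n) = false := by
          obtain ⟨n, hn⟩ := hall
          exact ⟨n, by simpa using hn⟩
        classical
        set n₁ := Nat.find hex with hn₁
        have hBfalse : ∀ m, n₁ ≤ m → f (B m) = false := by
          intro m hm
          have := hmono (show B m ≤ B n₁ by simp [hm])
          rw [Nat.find_spec hex] at this
          exact bool_le_false this
        have hBtrue : ∀ m, m < n₁ → f (B m) = true := by
          intro m hm
          have := Nat.find_min hex hm
          simpa using this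
        refine ⟨A n₁, ?_⟩
        funext z
        cases hc : n₁ with
        | zero =>
          rw [phi_A0]
          rcases lam_cases z with ⟨m, rfl⟩ | rfl | rfl | ⟨m, rfl⟩
          · simp [hAfalse (A m) (by simp)]
          · simp [hIfalse]
          · simp [hI'false]
          · exact (hBfalse m (by omega)).symm
        | succ k =>
          rw [phi_A_succ]
          rcases lam_cases z with ⟨m, rfl⟩ | rfl | rfl | ⟨m, rfl⟩
          · simp [hAfalse (A m) (by simp)]
          · simp [hIfalse]
          · simp [hI'false]
          · by_cases hm : m ≤ k
            · simp [hm, hBtrue m (by omega)]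
            · have := hBfalse m (by omega)
              simp [hm, this]

/-! ### Assembly -/

noncomputable def Phi : Lam' → {f : Lam' → Bool // ScottCont f} :=
  fun x => ⟨phi x, scottCont_phi x⟩

lemma Phi_strictMono : StrictMono Phi := by
  intro x y hxy
  refine lt_of_le_of_ne ?_ ?_
  · exact phi_mono hxy.le
  · intro hEq
    obtain ⟨z, hz1, hz2⟩ := phi_witness hxy
    have : phi x z = phi y z := congrFun (congrArg Subtype.val hEq) z
    rw [hz1, hz2] at this
    exact Bool.false_ne_true this

lemma Phi_surjective : Function.Surjective Phi := by
  rintro ⟨f, hf⟩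
  obtain ⟨x, hx⟩ := phi_surj_aux f hf
  exact ⟨x, Subtype.ext hx⟩

end Stmt10Aux

/-- `Λ′` is order-isomorphic to `C(Λ′,2)` ordered pointwise. -/
theorem stmt_10 :
    Nonempty (Lam' ≃o {f : Lam' → Bool // ScottCont f}) := by
  exact ⟨StrictMono.orderIsoOfSurjective _ Stmt10Aux.Phi_strictMono Stmt10Aux.Phi_surjective⟩
end

section
/- Let V be the linear order of type 1 + ω* + ω + 1, i.e., {−∞} ⊕ ℕᵒᵖ ⊕ ℕ ⊕ {+∞} with elements −∞ ≤ ⋯ ≤ −2 ≤ −1 ≤ 0 ≤ +1 ≤ +2 ≤ ⋯ ≤ +∞. Then V is an ω-CPO, but V is not order-isomorphic to the poset C(V,2) of Scott-continuous functions from V to 2 = {0 ≤ 1} ordered pointwise. -/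
/-- `V`: the linear order `{−∞} ⊕ ℕᵒᵖ ⊕ ℕ ⊕ {+∞}` of type `1 + ω* + ω + 1`
(`−∞ = ⊥` of the left block `WithBot ℕᵒᵈ`, `+∞ = ⊤` of the right block
`WithTop ℕ`). -/
abbrev V : Type := Lex ((WithBot ℕᵒᵈ) ⊕ (WithTop ℕ))

namespace Stmt11Aux

/-- Anything above a right-block element is a right-block element. -/
lemma inr_le_cases {b : WithTop ℕ} {x : V} (h : toLex (Sum.inr b) ≤ x) :
    ∃ b' : WithTop ℕ, x = toLex (Sum.inr b') := by
  rcases x with a | b'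
  · exact absurd h Sum.Lex.not_inr_le_inl
  · exact ⟨b', rfl⟩

/-- ω-CPO part. -/
lemma omega_cpo : OmegaCPO V := by
  constructor
  · exact ⟨⊥, fun x => bot_le⟩
  · intro c hc
    by_cases hr : ∃ N b, c N = toLex (Sum.inr (b : WithTop ℕ))
    · -- the sequence enters the right block
      obtain ⟨N, b0, hN⟩ := hr
      have htail : ∀ n : ℕ, ∃ b : WithTop ℕ, c (N + n) = toLex (Sum.inr b) := by
        intro n
        apply inr_le_cases (b := b0)
        rw [← hN]
        exact hc (Nat.le_add_right N n)
      choose b hb using htail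
      have hbmono : Monotone b := by
        intro m k hmk
        have : c (N + m) ≤ c (N + k) := hc (by omega)
        rw [hb m, hb k] at this
        exact Sum.Lex.inr_le_inr_iff.mp this
      have hs : IsLUB (Set.range b) (sSup (Set.range b)) := isLUB_sSup _
      refine ⟨toLex (Sum.inr (sSup (Set.range b))), ?_, ?_⟩
      · rintro x ⟨n, rfl⟩
        calc c n ≤ c (N + n) := hc (by omega)
        _ = toLex (Sum.inr (b n)) := hb n
        _ ≤ toLex (Sum.inr (sSup (Set.range b))) :=
          Sum.Lex.inr_le_inr_iff.mpr (hs.1 ⟨n, rfl⟩)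
      · intro u hu
        have hNu : toLex (Sum.inr b0) ≤ u := hN ▸ hu ⟨N, rfl⟩
        obtain ⟨u', rfl⟩ := inr_le_cases hNu
        refine Sum.Lex.inr_le_inr_iff.mpr (hs.2 ?_)
        rintro y ⟨n, rfl⟩
        have : c (N + n) ≤ toLex (Sum.inr u') := hu ⟨N + n, rfl⟩
        rw [hb n] at this
        exact Sum.Lex.inr_le_inr_iff.mp this
    · -- the sequence stays in the left block
      push_neg at hr
      have hleft : ∀ n : ℕ, ∃ a : WithBot ℕᵒᵈ, c n = toLex (Sum.inl a) := by
        intro n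
        rcases h : c n with a | b
        · exact ⟨a, rfl⟩
        · exact absurd h (hr n b)
      choose a ha using hleft
      -- `>` is well-founded on `WithBot ℕᵒᵈ`, so the range of `a` has a greatest element
      obtain ⟨m, ⟨N, rfl⟩, hmax⟩ :=
        (IsWellFounded.wf (r := ((· > ·) : WithBot ℕᵒᵈ → WithBot ℕᵒᵈ → Prop))).has_min
          (Set.range a) ⟨a 0, 0, rfl⟩
      have hub : ∀ n, c n ≤ c N := by
        intro n
        rw [ha n, ha N]
        exact Sum.Lex.inl_le_inl_iff.mpr (le_of_not_gt (hmax (a n) ⟨n, rfl⟩))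
      exact ⟨c N, IsGreatest.isLUB ⟨⟨N, rfl⟩, fun x ⟨n, hn⟩ => hn ▸ hub n⟩⟩

open Classical in
/-- The function which is `false` exactly at `−∞`. -/
noncomputable def g : V → Bool := fun v => if v = (⊥ : V) then false else true

lemma g_bot : g ⊥ = false := by simp [g]

lemma g_of_ne {v : V} (hv : v ≠ ⊥) : g v = true := by simp [g, hv]

lemma g_mono : Monotone g := by
  intro x y hxy
  by_cases hx : x = (⊥ : V)
  · simp [g, hx]
  · have hy : y ≠ (⊥ : V) := by
      rintro rfl
      exact hx (le_antisymm (hxy) bot_le)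
    simp [g, hx, hy]

lemma g_scott : ScottCont g := by
  refine ⟨g_mono, ?_⟩
  intro c hc l hl
  constructor
  · rintro x ⟨n, rfl⟩
    exact g_mono (hl.1 ⟨n, rfl⟩)
  · intro u hu
    by_cases hlbot : l = (⊥ : V)
    · subst hlbot
      rw [g_bot]
      exact Bool.false_le u
    · rw [g_of_ne hlbot]
      by_cases hall : ∀ n, c n = (⊥ : V)
      · exfalso
        apply hlbot
        have : Set.range c = {(⊥ : V)} := by
          ext x
          simp only [Set.mem_range, Set.mem_singleton_iff]
          constructor
          · rintro ⟨n, rfl⟩; exact hall n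
          · rintro rfl; exact ⟨0, hall 0⟩
        exact hl.unique (this ▸ isLUB_singleton)
      · push_neg at hall
        obtain ⟨n, hn⟩ := hall
        have : g (c n) ≤ u := hu ⟨n, rfl⟩
        rwa [g_of_ne hn] at this

/-- In `V`, no element strictly below `⊤` bounds all elements strictly below `⊤`. -/
lemma no_max_below (w : V) (hw : w < ⊤) : ∃ x : V, x < ⊤ ∧ ¬ x ≤ w := by
  rcases w with a | b
  · refine ⟨toLex (Sum.inr ((0 : ℕ) : WithTop ℕ)), ?_, Sum.Lex.not_inr_le_inl⟩
    rw [← Sum.Lex.inr_top]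
    exact Sum.Lex.inr_lt_inr_iff.mpr (WithTop.coe_lt_top 0)
  · have hb : b < ⊤ := by
      rw [← Sum.Lex.inr_top] at hw
      exact Sum.Lex.inr_lt_inr_iff.mp hw
    obtain ⟨m, rfl⟩ := WithTop.ne_top_iff_exists.mp hb.ne
    refine ⟨toLex (Sum.inr ((m + 1 : ℕ) : WithTop ℕ)), ?_, ?_⟩
    · rw [← Sum.Lex.inr_top]
      exact Sum.Lex.inr_lt_inr_iff.mpr (WithTop.coe_lt_top (m + 1))
    · intro h
      have h2 := Sum.Lex.inr_le_inr_iff.mp h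
      rw [Nat.cast_withTop] at h2
      norm_cast at h2
      omega

end Stmt11Aux

/-- `V` is an ω-CPO, but is not order-isomorphic to `C(V,2)` ordered pointwise. -/
theorem stmt_11 :
    OmegaCPO V ∧ ¬ Nonempty (V ≃o {f : V → Bool // ScottCont f}) := by
  open Stmt11Aux in
  refine ⟨omega_cpo, ?_⟩
  rintro ⟨e⟩
  -- the top element of C(V,2): the constant function true
  have hTcont : ScottCont (fun _ : V => (true : Bool)) := by
    refine ⟨monotone_const, ?_⟩
    intro c hc l hl
    have : Set.range ((fun _ : V => (true : Bool)) ∘ c) = {true} := Set.range_const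
    rw [this]
    exact isLUB_singleton
  set S := {f : V → Bool // ScottCont f}
  let T : S := ⟨fun _ => true, hTcont⟩
  let G : S := ⟨Stmt11Aux.g, Stmt11Aux.g_scott⟩
  have hT : ∀ s : S, s ≤ T := fun s v => Bool.le_true _
  -- any Scott-continuous function other than the constant true is ≤ g
  have hG : ∀ s : S, s ≠ T → s ≤ G := by
    intro s hs
    have hbot : s.1 ⊥ = false := by
      by_contra h
      have hsb : s.1 ⊥ = true := by
        cases hb : s.1 (⊥ : V) with
        | false => exact absurd hb h
        | true => rfl
      apply hs
      apply Subtype.ext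
      funext v
      have : s.1 ⊥ ≤ s.1 v := s.2.1 bot_le
      rw [hsb] at this
      exact le_antisymm (Bool.le_true _) this
    intro v
    by_cases hv : v = (⊥ : V)
    · subst hv
      rw [hbot]
      exact Bool.false_le _
    · calc s.1 v ≤ true := Bool.le_true _
      _ = G.1 v := (Stmt11Aux.g_of_ne hv).symm
  have hGT : G < T := by
    refine lt_of_le_of_ne (hT G) ?_
    intro h
    have h2 : Stmt11Aux.g ⊥ = true := congrFun (congrArg Subtype.val h) (⊥ : V)
    rw [Stmt11Aux.g_bot] at h2
    exact Bool.false_ne_true h2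
  -- e.symm T is the top element of V
  have heT : e.symm T = (⊤ : V) := by
    refine le_antisymm le_top ?_
    have : e ⊤ ≤ T := hT _
    calc (⊤ : V) = e.symm (e ⊤) := (e.symm_apply_apply ⊤).symm
    _ ≤ e.symm T := e.symm.monotone this
  have hwlt : e.symm G < ⊤ := by
    rw [← heT]
    exact e.symm.strictMono hGT
  obtain ⟨x, hx1, hx2⟩ := Stmt11Aux.no_max_below (e.symm G) hwlt
  apply hx2
  have hxT : e x < T := by
    have : e x < e (e.symm T) := e.strictMono (by rwa [heT])
    rwa [e.apply_symm_apply] at this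
  have : e x ≤ G := hG _ hxT.ne
  calc x = e.symm (e x) := (e.symm_apply_apply x).symm
  _ ≤ e.symm G := e.symm.monotone this
end

section
/- In the linear order V of type 1 + ω* + ω + 1 ({−∞} ⊕ ℕᵒᵖ ⊕ ℕ ⊕ {+∞}), the function φ : V → 2 defined by φ(x) = 0 if x = −∞ and φ(x) = 1 otherwise is Scott-continuous, and φ is the immediate predecessor of the constant function 1 in the pointwise order on C(V,2). -/
/-- The least element `−∞` of `V`. -/
def negInf : V := toLex (Sum.inl (⊥ : WithBot ℕᵒᵈ))

/-- `φ x = 0` iff `x = −∞`, and `φ x = 1` otherwise. -/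
def phi (x : V) : Bool := !decide (x = negInf)


lemma negInf_le (y : V) : negInf ≤ y := bot_le (a := y)

lemma le_negInf {y : V} (h : y ≤ negInf) : y = negInf := le_antisymm h (negInf_le y)

lemma phi_eq_false {x : V} (h : x = negInf) : phi x = false := by
  simp [phi, h]

lemma phi_eq_true {x : V} (h : x ≠ negInf) : phi x = true := by
  simp [phi, h]

lemma phi_mono : Monotone phi := by
  intro x y hxy
  by_cases hx : x = negInf
  · simp [phi_eq_false hx]
  · have hy : y ≠ negInf := fun hy => hx (le_negInf (hy ▸ hxy))
    simp [phi_eq_true hx, phi_eq_true hy]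

/-- `φ` is Scott-continuous and is the immediate predecessor of the constant
function `1` in the pointwise order on `C(V,2)`. -/
theorem stmt_12 :
    ScottCont phi ∧ phi < (fun _ => true) ∧
    ∀ h : V → Bool, ScottCont h → ¬ (phi < h ∧ h < fun _ => true) := by
  refine ⟨⟨phi_mono, ?_⟩, ?_, ?_⟩
  · intro c hc l hl
    by_cases hlne : l = negInf
    · have hall : ∀ n, phi (c n) = false := fun n =>
        phi_eq_false (le_negInf (hlne ▸ hl.1 (Set.mem_range_self n)))
      constructor
      · rintro b ⟨n, rfl⟩
        simp [Function.comp, hall n, phi_eq_false hlne]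
      · intro b _
        simp [phi_eq_false hlne]
    · rw [phi_eq_true hlne]
      constructor
      · rintro b ⟨n, rfl⟩
        exact le_top
      · intro b hb
        have hex : ∃ n, c n ≠ negInf := by
          by_contra hno
          push_neg at hno
          exact hlne (le_negInf (hl.2 (fun x hx => by
            obtain ⟨n, rfl⟩ := hx
            exact (hno n).le)))
        obtain ⟨n, hn⟩ := hex
        have := hb ⟨n, rfl⟩
        rwa [Function.comp, phi_eq_true hn] at this
  · constructor
    · intro x
      simp [phi]
    · intro hle
      have := hle negInf
      rw [phi_eq_false rfl] at this
      exact absurd this (by simp)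
  · rintro h _ ⟨⟨hph, hnle⟩, hh1, hnle'⟩
    have hx : ∃ x, h x = true ∧ phi x = false := by
      by_contra hno
      push_neg at hno
      apply hnle
      intro x
      by_cases hhx : h x = true
      · have := hno x hhx
        simp_all [phi]
      · simp [Bool.not_eq_true] at hhx
        simp [hhx]
    obtain ⟨x, hxt, hxf⟩ := hx
    have hxn : x = negInf := by
      by_contra hne
      rw [phi_eq_true hne] at hxf; exact Bool.noConfusion hxf
    apply hnle'
    intro y
    by_cases hy : y = negInf
    · simp [hy, hxn ▸ hxt]
    · simp [phi_eq_true hy ▸ hph y]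
end
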